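/- arXiv:1911.01133 — 4 statements merged into one kernel-verified Lean document; each statement's English description precedes it below -/
import Mathlib

section
/- Let T < ∞ and suppose the control functions κᵖ and κᶜ are measurable and bounded on [0,T). If u is a solution of the relative guidance-by-repulsion equation on [0,T) with u(0) ≠ 0 and u(t) ≠ 0 for all t ∈ [0,T), then sup_{t ∈ [0,T)} |u(t)| < ∞ and inf_{t ∈ [0,T)} |u(t)| > 0; that is, the relative position can neither blow up to infinity nor hit the origin in finite time. -/
open Real Filter MeasureTheory intervalIntegral
open scoped RealInnerProductSpace Topology

noncomputable section

/-- Perpendicular rotation in the plane: `(a, b)^⊥ = (-b, a)`. -/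
def perp (w : EuclideanSpace ℝ (Fin 2)) : EuclideanSpace ℝ (Fin 2) :=
  (WithLp.equiv 2 (Fin 2 → ℝ)).symm ![-(w 1), w 0]

/-- The relative guidance-by-repulsion equation
`u'' + (κᵖ(t) f_d(|u|) − f_e(|u|)) u + ν u' = κᶜ(t) u^⊥` holds at time `t`. -/
def SolvesRel (fd fe : ℝ → ℝ) (ν : ℝ) (κp κc : ℝ → ℝ)
    (u : ℝ → EuclideanSpace ℝ (Fin 2)) (t : ℝ) : Prop :=
  deriv (deriv u) t + (κp t * fd ‖u t‖ - fe ‖u t‖) • u t + ν • deriv u t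
    = κc t • perp (u t)

/-!
On the compact interval `[0, T]` the `C²` curve `u` and its first two derivatives are bounded,
which gives the upper bound at once, and the lower bound reduces to `u T ≠ 0`. Solving the
equation for the singular repulsion `fe ‖u‖ • u` shows that it stays bounded along the
trajectory, so `t ↦ ∫ r in ‖u t‖..rp, r * fe r` has bounded derivative on `[0, T)` and hence
stays bounded there. Since `r * fe r` is not integrable near `0`, this rules out `‖u t‖ → 0`
as `t → T`.
-/

open Set

theorem norm_perp (w : EuclideanSpace ℝ (Fin 2)) : ‖perp w‖ = ‖w‖ := by
  simp [perp, EuclideanSpace.norm_eq, add_comm]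

theorem HasDerivAt.norm_of_ne_zero {E : Type*} [NormedAddCommGroup E] [InnerProductSpace ℝ E]
    {u : ℝ → E} {u' : E} {t : ℝ} (hu : HasDerivAt u u' t) (h0 : u t ≠ 0) :
    HasDerivAt (fun s => ‖u s‖) (⟪u t, u'⟫ / ‖u t‖) t := by
  have hpos : 0 < ‖u t‖ := norm_pos_iff.2 h0
  convert hu.norm_sq.sqrt (by positivity) using 1
  · simp only [Real.sqrt_sq (norm_nonneg _)]
  · rw [Real.sqrt_sq hpos.le]
    field_simp

theorem hasDerivAt_intervalIntegral_mul_norm {E : Type*} [NormedAddCommGroup E]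
    [InnerProductSpace ℝ E] {g : ℝ → ℝ} {a : ℝ} {u : ℝ → E} {u' : E} {t : ℝ}
    (hg : ContinuousOn g (Ioi 0)) (ha : 0 < a) (hu : HasDerivAt u u' t) (h0 : u t ≠ 0) :
    HasDerivAt (fun s => ∫ r in ‖u s‖..a, r * g r) (-(g ‖u t‖ * ⟪u t, u'⟫)) t := by
  have hpos : 0 < ‖u t‖ := norm_pos_iff.2 h0
  have hrg : ContinuousOn (fun r => r * g r) (Ioi 0) := continuousOn_id.mul hg
  have hftc : HasDerivAt (fun y => ∫ r in y..a, r * g r) (-(‖u t‖ * g ‖u t‖)) ‖u t‖ :=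
    intervalIntegral.integral_hasDerivAt_left
      (hrg.mono fun r hr => (lt_min hpos ha).trans_le hr.1).intervalIntegrable
      (hrg.stronglyMeasurableAtFilter isOpen_Ioi _ hpos) (hrg.continuousAt (Ioi_mem_nhds hpos))
  refine (hftc.comp t (hu.norm_of_ne_zero h0)).congr_deriv ?_
  field_simp

section Divergence

variable {g : ℝ → ℝ} {a : ℝ}

theorem exists_lt_intervalIntegral_of_not_integrableOn (hg : ContinuousOn g (Ioc 0 a))
    (hg0 : ∀ r ∈ Ioc 0 a, 0 ≤ g r) (hdiv : ¬ IntegrableOn g (Ioc 0 a)) (B : ℝ) :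
    ∃ s ∈ Ioc 0 a, B < ∫ r in s..a, g r := by
  have ha : 0 < a := by
    by_contra! ha
    exact hdiv (by simp [Ioc_eq_empty_of_le ha])
  by_contra! hB
  have hs : ∀ n : ℕ, a / (n + 1) ∈ Ioc 0 a := fun n =>
    ⟨by positivity, div_le_self ha.le (by simp)⟩
  refine hdiv (integrableOn_Ioc_of_intervalIntegral_norm_bounded_left (I := B) (l := atTop)
    (a := fun n : ℕ => a / (n + 1)) (fun n => ?_) ?_ (Eventually.of_forall fun n => ?_))
  · exact ((hg.mono fun r hr => ⟨(hs n).1.trans_le hr.1, hr.2⟩).integrableOn_Icc).mono_set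
      Ioc_subset_Icc_self
  · simpa [div_eq_mul_inv] using (tendsto_one_div_add_atTop_nhds_zero_nat (𝕜 := ℝ)).const_mul a
  · rw [setIntegral_congr_fun measurableSet_Ioc fun r hr =>
      Real.norm_of_nonneg (hg0 r ⟨(hs n).1.trans hr.1, hr.2⟩),
      ← intervalIntegral.integral_of_le (hs n).2]
    exact hB _ (hs n)

theorem tendsto_intervalIntegral_nhdsGT_zero_atTop (hg : ContinuousOn g (Ioc 0 a))
    (hg0 : ∀ r ∈ Ioc 0 a, 0 ≤ g r) (hdiv : ¬ IntegrableOn g (Ioc 0 a)) :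
    Tendsto (fun y => ∫ r in y..a, g r) (𝓝[>] 0) atTop := by
  refine tendsto_atTop.2 fun B => ?_
  obtain ⟨s, hs, hBs⟩ := exists_lt_intervalIntegral_of_not_integrableOn hg hg0 hdiv B
  filter_upwards [Ioc_mem_nhdsGT hs.1] with y hy
  have hya : Ioc y a ⊆ Ioc 0 a := Ioc_subset_Ioc_left hy.1.le
  calc B ≤ ∫ r in s..a, g r := hBs.le
    _ ≤ ∫ r in y..a, g r := intervalIntegral.integral_mono_interval hy.2 hs.2 le_rfl
        ((ae_restrict_iff' measurableSet_Ioc).2 (.of_forall fun r hr => hg0 r (hya hr)))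
        (hg.mono ?_).intervalIntegrable
  rw [uIcc_of_le (hy.2.trans hs.2)]
  exact fun r hr => ⟨hy.1.trans_le hr.1, hr.2⟩

end Divergence

theorem le_add_mul_of_abs_deriv_le {φ φ' : ℝ → ℝ} {a b K : ℝ}
    (hφ : ∀ t ∈ Ico a b, HasDerivAt φ (φ' t) t) (hK : ∀ t ∈ Ico a b, |φ' t| ≤ K)
    {t : ℝ} (ht : t ∈ Ico a b) : φ t ≤ φ a + K * (b - a) := by
  have hsub : Icc a t ⊆ Ico a b := Icc_subset_Ico_right ht.2
  have h := norm_image_sub_le_of_norm_deriv_le_segment'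
    (fun x hx => (hφ x (hsub hx)).hasDerivWithinAt)
    (fun x hx => hK x (hsub (Ico_subset_Icc_self hx))) t ⟨ht.1, le_rfl⟩
  have hK0 : 0 ≤ K := (abs_nonneg _).trans (hK t ht)
  rw [Real.norm_eq_abs] at h
  nlinarith [le_abs_self (φ t - φ a), ht.2]

section RelativeEquation

variable {fd fe : ℝ → ℝ} {ν : ℝ} {κp κc : ℝ → ℝ} {u : ℝ → EuclideanSpace ℝ (Fin 2)} {t : ℝ}

theorem SolvesRel.norm_fe_smul_le (h : SolvesRel fd fe ν κp κc u t) :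
    ‖fe ‖u t‖ • u t‖ ≤ ‖deriv (deriv u) t‖ + (|κp t| * |fd ‖u t‖| + |κc t|) * ‖u t‖
      + |ν| * ‖deriv u t‖ := by
  have heq : fe ‖u t‖ • u t = deriv (deriv u) t + (κp t * fd ‖u t‖) • u t + ν • deriv u t
      - κc t • perp (u t) := by
    unfold SolvesRel at h
    linear_combination (norm := module) -h
  rw [heq]
  refine (norm_sub_le _ _).trans ?_
  grw [norm_add₃_le]
  simp only [norm_smul, norm_perp, Real.norm_eq_abs, abs_mul]
  linarith

theorem SolvesRel.abs_fe_mul_inner_le {M₀ M₁ M₂ Cκ Cfd : ℝ}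
    (h : SolvesRel fd fe ν κp κc u t) (h₀ : ‖u t‖ ≤ M₀) (h₁ : ‖deriv u t‖ ≤ M₁)
    (h₂ : ‖deriv (deriv u) t‖ ≤ M₂) (hκp : |κp t| ≤ Cκ) (hκc : |κc t| ≤ Cκ)
    (hfd : |fd ‖u t‖| ≤ Cfd) :
    |fe ‖u t‖ * ⟪u t, deriv u t⟫| ≤ (M₂ + (Cκ * Cfd + Cκ) * M₀ + |ν| * M₁) * M₁ := by
  have hCκ : 0 ≤ Cκ := (abs_nonneg _).trans hκp
  have hCfd : 0 ≤ Cfd := (abs_nonneg _).trans hfd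
  have hM₀ : 0 ≤ M₀ := (norm_nonneg _).trans h₀
  have hM₁ : 0 ≤ M₁ := (norm_nonneg _).trans h₁
  have hM₂ : 0 ≤ M₂ := (norm_nonneg _).trans h₂
  rw [← real_inner_smul_left]
  calc _ ≤ ‖fe ‖u t‖ • u t‖ * ‖deriv u t‖ := abs_real_inner_le_norm _ _
    _ ≤ (‖deriv (deriv u) t‖ + (|κp t| * |fd ‖u t‖| + |κc t|) * ‖u t‖
        + |ν| * ‖deriv u t‖) * ‖deriv u t‖ := by
      gcongr
      exact h.norm_fe_smul_le
    _ ≤ _ := by gcongr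

theorem apply_ne_zero_of_solvesRel_Ico {rp T : ℝ} (hrp : 0 < rp) (hT : 0 < T)
    (hfe : ContinuousOn fe (Ioi 0)) (hfe_nonneg : ∀ r, 0 < r → 0 ≤ fe r)
    (hfe_div : ¬ IntegrableOn (fun r => r * fe r) (Ioc 0 rp))
    (hfd_bdd : ∃ C, ∀ r, 0 < r → |fd r| ≤ C)
    (hκ_bdd : ∃ C, ∀ t ∈ Ico 0 T, |κp t| ≤ C ∧ |κc t| ≤ C)
    (hu : ContDiff ℝ 2 u) (hsol : ∀ t ∈ Ico 0 T, SolvesRel fd fe ν κp κc u t)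
    (hne : ∀ t ∈ Ico 0 T, u t ≠ 0) : u T ≠ 0 := by
  intro huT
  obtain ⟨Cκ, hκ⟩ := hκ_bdd
  obtain ⟨Cfd, hfd⟩ := hfd_bdd
  have hu' : ContDiff ℝ 1 (deriv u) := hu.deriv'
  obtain ⟨M₀, hM₀⟩ := isCompact_Icc.exists_bound_of_continuousOn (s := Icc 0 T)
    hu.continuous.continuousOn
  obtain ⟨M₁, hM₁⟩ := isCompact_Icc.exists_bound_of_continuousOn (s := Icc 0 T)
    hu'.continuous.continuousOn
  obtain ⟨M₂, hM₂⟩ := isCompact_Icc.exists_bound_of_continuousOn (s := Icc 0 T)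
    (hu'.continuous_deriv le_rfl).continuousOn
  set φ : ℝ → ℝ := fun s => ∫ r in ‖u s‖..rp, r * fe r
  have hφ : ∀ t ∈ Ico 0 T, HasDerivAt φ (-(fe ‖u t‖ * ⟪u t, deriv u t⟫)) t := fun t ht =>
    hasDerivAt_intervalIntegral_mul_norm hfe hrp
      ((hu.differentiable (by norm_num)) t).hasDerivAt (hne t ht)
  have hφ' : ∀ t ∈ Ico 0 T, |-(fe ‖u t‖ * ⟪u t, deriv u t⟫)| ≤
      (M₂ + (Cκ * Cfd + Cκ) * M₀ + |ν| * M₁) * M₁ := fun t ht => by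
    have ht' := Ico_subset_Icc_self ht
    rw [abs_neg]
    exact (hsol t ht).abs_fe_mul_inner_le (hM₀ t ht') (hM₁ t ht') (hM₂ t ht') (hκ t ht).1
      (hκ t ht).2 (hfd _ (norm_pos_iff.2 (hne t ht)))
  have hφ_tendsto : Tendsto φ (𝓝[<] T) atTop := by
    refine (tendsto_intervalIntegral_nhdsGT_zero_atTop
      ((continuousOn_id.mul hfe).mono Ioc_subset_Ioi_self)
      (fun r hr => mul_nonneg hr.1.le (hfe_nonneg r hr.1)) hfe_div).comp ?_
    refine tendsto_nhdsWithin_iff.2 ⟨?_, ?_⟩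
    · simpa [huT] using (hu.continuous.norm.tendsto T).mono_left nhdsWithin_le_nhds
    · filter_upwards [Ico_mem_nhdsLT hT] with t ht using norm_pos_iff.2 (hne t ht)
  obtain ⟨t, hφt, ht⟩ := ((hφ_tendsto.eventually_gt_atTop _).and (Ico_mem_nhdsLT hT)).exists
  exact (le_add_mul_of_abs_deriv_le hφ hφ' ht).not_gt hφt

end RelativeEquation

theorem relative_state_no_finite_time_blowup_or_collision_general
    (fd fe : ℝ → ℝ) (rp : ℝ) (hrp : 0 < rp)
    (hfe_lip : LocallyLipschitzOn (Set.Ioi (0:ℝ)) fe)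
    (hfd_nonneg : ∀ r : ℝ, 0 < r → 0 ≤ fd r)
    (hfd_bdd : ∃ C : ℝ, ∀ r : ℝ, 0 < r → fd r ≤ C)
    (hfe_nonneg : ∀ r : ℝ, 0 < r → 0 ≤ fe r)
    (hfe_div : ¬ MeasureTheory.IntegrableOn (fun r => r * fe r) (Set.Ioc 0 rp))
    (ν : ℝ) (T : ℝ)
    (κp κc : ℝ → ℝ)
    (hκ_bdd : ∃ C : ℝ, ∀ t ∈ Set.Ico (0:ℝ) T, |κp t| ≤ C ∧ |κc t| ≤ C)
    (u : ℝ → EuclideanSpace ℝ (Fin 2)) (hu : ContDiff ℝ 2 u)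
    (hsol : ∀ t ∈ Set.Ico (0:ℝ) T, SolvesRel fd fe ν κp κc u t)
    (hne : ∀ t ∈ Set.Ico (0:ℝ) T, u t ≠ 0) :
    (∃ C : ℝ, ∀ t ∈ Set.Ico (0:ℝ) T, ‖u t‖ ≤ C) ∧
    (∃ c : ℝ, 0 < c ∧ ∀ t ∈ Set.Ico (0:ℝ) T, c ≤ ‖u t‖) := by
  obtain ⟨C, hC⟩ := isCompact_Icc.exists_bound_of_continuousOn (s := Icc 0 T)
    hu.continuous.continuousOn
  refine ⟨⟨C, fun t ht => hC t (Ico_subset_Icc_self ht)⟩, ?_⟩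
  rcases le_or_gt T 0 with hT | hT
  · exact ⟨1, one_pos, fun t ht => absurd (ht.1.trans_lt ht.2) hT.not_gt⟩
  have hfd_abs : ∃ C, ∀ r, 0 < r → |fd r| ≤ C := hfd_bdd.imp fun C hC r hr =>
    (abs_of_nonneg (hfd_nonneg r hr)).trans_le (hC r hr)
  have huT : u T ≠ 0 := apply_ne_zero_of_solvesRel_Ico hrp hT hfe_lip.continuousOn hfe_nonneg
    hfe_div hfd_abs hκ_bdd hu hsol hne
  have hpos : ∀ t ∈ Icc 0 T, 0 < ‖u t‖ := fun t ht => norm_pos_iff.2 <|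
    ht.2.eq_or_lt.elim (fun h => h ▸ huT) fun h => hne t ⟨ht.1, h⟩
  obtain ⟨c, hc, hcu⟩ := isCompact_Icc.exists_forall_le' hu.continuous.norm.continuousOn hpos
  exact ⟨c, hc, fun t ht => hcu t (Ico_subset_Icc_self ht)⟩

/-- On a finite time interval `[0, T)`, with measurable bounded controls,
a solution of the relative equation that never hits the origin can neither blow up
to infinity nor approach the origin: `sup |u| < ∞` and `inf |u| > 0`. -/
theorem relative_state_no_finite_time_blowup_or_collision
    (fd fe : ℝ → ℝ) (rp γm : ℝ) (hrp : 0 < rp) (hγm : 0 < γm)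
    (hfd_lip : LocallyLipschitzOn (Set.Ioi (0:ℝ)) fd)
    (hfe_lip : LocallyLipschitzOn (Set.Ioi (0:ℝ)) fe)
    (hf_neg : ∀ r : ℝ, 0 < r → r < rp → fd r - fe r < 0)
    (hf_nonneg : ∀ r : ℝ, rp ≤ r → 0 ≤ fd r - fe r)
    (hf_deriv : 0 < deriv (fun r => fd r - fe r) rp)
    (hfd_nonneg : ∀ r : ℝ, 0 < r → 0 ≤ fd r)
    (hfd_bdd : ∃ C : ℝ, ∀ r : ℝ, 0 < r → fd r ≤ C)
    (hfd_lim : Filter.Tendsto fd Filter.atTop (nhds γm))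
    (hfe_nonneg : ∀ r : ℝ, 0 < r → 0 ≤ fe r)
    (hfe_div : ¬ MeasureTheory.IntegrableOn (fun r => r * fe r) (Set.Ioc 0 rp))
    (hfe_lim : Filter.Tendsto fe Filter.atTop (nhds 0))
    (ν : ℝ) (hν : 0 < ν) (T : ℝ)
    (κp κc : ℝ → ℝ) (hκp_meas : Measurable κp) (hκc_meas : Measurable κc)
    (hκ_bdd : ∃ C : ℝ, ∀ t ∈ Set.Ico (0:ℝ) T, |κp t| ≤ C ∧ |κc t| ≤ C)
    (u : ℝ → EuclideanSpace ℝ (Fin 2)) (hu : ContDiff ℝ 2 u)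
    (hsol : ∀ t ∈ Set.Ico (0:ℝ) T, SolvesRel fd fe ν κp κc u t)
    (hu0 : u 0 ≠ 0) (hne : ∀ t ∈ Set.Ico (0:ℝ) T, u t ≠ 0) :
    (∃ C : ℝ, ∀ t ∈ Set.Ico (0:ℝ) T, ‖u t‖ ≤ C) ∧
    (∃ c : ℝ, 0 < c ∧ ∀ t ∈ Set.Ico (0:ℝ) T, c ≤ ‖u t‖) :=
  relative_state_no_finite_time_blowup_or_collision_general fd fe rp hrp hfe_lip hfd_nonneg hfd_bdd
    hfe_nonneg hfe_div ν T κp κc hκ_bdd u hu hsol hne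
end
end

section
/- Energy growth estimate: if u solves the relative guidance-by-repulsion equation on an interval I with continuous controls κᵖ, κᶜ and u(t) ≠ 0 for all t ∈ I, then for all t ∈ I the standard energy satisfies E'(t) ≤ (1/(2ν)) ((1 − κᵖ(t))² f_d(|u(t)|)² + κᶜ(t)²) |u(t)|². -/
/-!
Differentiating, `E' = ⟪u'' + f(|u|) u, u'⟫`, and the equation turns this into
`⟪v, u'⟫ - ν |u'|²` with `v = (1 - κᵖ) f_d(|u|) u + κᶜ u^⊥`. Completing the square,
`⟪v, x⟫ - ν |x|² ≤ |v|² / (4ν)`, and `|v|² = ((1 - κᵖ)² f_d(|u|)² + κᶜ²) |u|²` because `u ⊥ u^⊥`.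
-/

open Real Filter MeasureTheory intervalIntegral
open scoped RealInnerProductSpace Topology

noncomputable section

/-- The potential `P(w) = ∫_{r_p}^{‖w‖} r (f_d(r) − f_e(r)) dr`. -/
def pot (fd fe : ℝ → ℝ) (rp : ℝ) (w : EuclideanSpace ℝ (Fin 2)) : ℝ :=
  ∫ r in rp..‖w‖, r * (fd r - fe r)

lemma inner_self_perp (w : EuclideanSpace ℝ (Fin 2)) : ⟪w, perp w⟫ = 0 := by
  simp only [perp, PiLp.inner_apply, Fin.sum_univ_two, WithLp.equiv_symm_apply,
    Matrix.cons_val_zero, Matrix.cons_val_one, Matrix.cons_val_fin_one, RCLike.inner_apply,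
    conj_trivial]
  ring

lemma inner_perp_perp (w : EuclideanSpace ℝ (Fin 2)) : ⟪perp w, perp w⟫ = ⟪w, w⟫ := by
  simp only [perp, PiLp.inner_apply, Fin.sum_univ_two, WithLp.equiv_symm_apply,
    Matrix.cons_val_zero, Matrix.cons_val_one, Matrix.cons_val_fin_one, RCLike.inner_apply,
    conj_trivial]
  ring

lemma norm_smul_add_smul_perp_sq (a b : ℝ) (w : EuclideanSpace ℝ (Fin 2)) :
    ‖a • w + b • perp w‖ ^ 2 = (a ^ 2 + b ^ 2) * ‖w‖ ^ 2 := by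
  have hcross : ⟪perp w, w⟫ = 0 := by rw [real_inner_comm]; exact inner_self_perp w
  simp only [← real_inner_self_eq_norm_sq, inner_add_left, inner_add_right, real_inner_smul_left,
    real_inner_smul_right, inner_self_perp, hcross, inner_perp_perp]
  ring

section InnerProductSpace

variable {F : Type*} [NormedAddCommGroup F] [InnerProductSpace ℝ F]

lemma real_inner_sub_mul_norm_sq_le {ν : ℝ} (hν : 0 < ν) (v x : F) :
    ⟪v, x⟫ - ν * ‖x‖ ^ 2 ≤ ‖v‖ ^ 2 / (4 * ν) := by
  have h := norm_sub_sq_real v ((2 * ν) • x)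
  rw [real_inner_smul_right, norm_smul, mul_pow, Real.norm_of_nonneg (by positivity)] at h
  rw [le_div_iff₀ (by positivity)]
  nlinarith [sq_nonneg ‖v - (2 * ν) • x‖]

lemma HasDerivAt.norm {f : ℝ → F} {f' : F} {t : ℝ} (hf : HasDerivAt f f' t) (h0 : f t ≠ 0) :
    HasDerivAt (fun s => ‖f s‖) (⟪f t, f'⟫ / ‖f t‖) t := by
  have hsqrt := hf.norm_sq.sqrt (by positivity)
  simp only [Real.sqrt_sq (norm_nonneg _)] at hsqrt
  convert hsqrt using 1
  field_simp

lemma HasDerivAt.integral_norm {g : ℝ → ℝ} {a : ℝ} (ha : 0 < a) (hg : ContinuousOn g (Set.Ioi 0))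
    {f : ℝ → F} {f' : F} {t : ℝ} (hf : HasDerivAt f f' t) (h0 : f t ≠ 0) :
    HasDerivAt (fun s => ∫ r in a..‖f s‖, g r) (g ‖f t‖ * (⟪f t, f'⟫ / ‖f t‖)) t := by
  have hpos : 0 < ‖f t‖ := norm_pos_iff.mpr h0
  have hsub : Set.uIcc a ‖f t‖ ⊆ Set.Ioi 0 := fun r hr =>
    lt_of_lt_of_le (lt_min ha hpos) hr.1
  have hFTC : HasDerivAt (fun x => ∫ r in a..x, g r) (g ‖f t‖) ‖f t‖ :=
    integral_hasDerivAt_right ((hg.mono hsub).intervalIntegrable)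
      (hg.stronglyMeasurableAtFilter isOpen_Ioi _ hpos)
      (hg.continuousAt (isOpen_Ioi.mem_nhds hpos))
  exact hFTC.comp t (hf.norm h0)

end InnerProductSpace

lemma HasDerivAt.pot {fd fe : ℝ → ℝ} {rp : ℝ} (hrp : 0 < rp)
    (hfd : ContinuousOn fd (Set.Ioi 0)) (hfe : ContinuousOn fe (Set.Ioi 0))
    {u : ℝ → EuclideanSpace ℝ (Fin 2)} {u' : EuclideanSpace ℝ (Fin 2)} {t : ℝ}
    (hu : HasDerivAt u u' t) (h0 : u t ≠ 0) :
    HasDerivAt (fun s => pot fd fe rp (u s)) ((fd ‖u t‖ - fe ‖u t‖) * ⟪u t, u'⟫) t := by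
  have hg : ContinuousOn (fun r : ℝ => r * (fd r - fe r)) (Set.Ioi 0) :=
    continuousOn_id.mul (hfd.sub hfe)
  refine (hu.integral_norm hrp hg h0).congr_deriv ?_
  have : ‖u t‖ ≠ 0 := norm_ne_zero_iff.mpr h0
  field_simp

lemma hasDerivAt_energy {fd fe : ℝ → ℝ} {rp : ℝ} (hrp : 0 < rp)
    (hfd : ContinuousOn fd (Set.Ioi 0)) (hfe : ContinuousOn fe (Set.Ioi 0))
    {u : ℝ → EuclideanSpace ℝ (Fin 2)} (hu : ContDiff ℝ 2 u) {t : ℝ} (h0 : u t ≠ 0) :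
    HasDerivAt (fun s => ‖deriv u s‖ ^ 2 / 2 + pot fd fe rp (u s))
      ⟪deriv (deriv u) t + (fd ‖u t‖ - fe ‖u t‖) • u t, deriv u t⟫ t := by
  rw [show (2 : WithTop ℕ∞) = 1 + 1 from rfl, contDiff_succ_iff_deriv] at hu
  have hu₁ : HasDerivAt u (deriv u t) t := (hu.1 t).hasDerivAt
  have hu₂ : HasDerivAt (deriv u) (deriv (deriv u) t) t :=
    (hu.2.2.differentiable one_ne_zero t).hasDerivAt
  refine ((hu₂.norm_sq.div_const 2).add (hu₁.pot hrp hfd hfe h0)).congr_deriv ?_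
  rw [inner_add_left, real_inner_smul_left, real_inner_comm (deriv u t),
    real_inner_comm (deriv u t)]
  ring

lemma SolvesRel.deriv_deriv_add_smul {fd fe : ℝ → ℝ} {ν : ℝ} {κp κc : ℝ → ℝ}
    {u : ℝ → EuclideanSpace ℝ (Fin 2)} {t : ℝ} (h : SolvesRel fd fe ν κp κc u t) :
    deriv (deriv u) t + (fd ‖u t‖ - fe ‖u t‖) • u t
      = ((1 - κp t) * fd ‖u t‖) • u t + κc t • perp (u t) - ν • deriv u t := by
  rw [← h]
  module

theorem energy_growth_estimate_general
    (fd fe : ℝ → ℝ) (rp : ℝ) (hrp : 0 < rp)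
    (hfd_lip : LocallyLipschitzOn (Set.Ioi (0:ℝ)) fd)
    (hfe_lip : LocallyLipschitzOn (Set.Ioi (0:ℝ)) fe)
    (ν : ℝ) (hν : 0 < ν) (κp κc : ℝ → ℝ)
    (I : Set ℝ) (u : ℝ → EuclideanSpace ℝ (Fin 2)) (hu : ContDiff ℝ 2 u)
    (hsol : ∀ t ∈ I, SolvesRel fd fe ν κp κc u t)
    (hne : ∀ t ∈ I, u t ≠ 0) :
    ∀ t ∈ I, deriv (fun s => ‖deriv u s‖ ^ 2 / 2 + pot fd fe rp (u s)) t
      ≤ 1 / (2 * ν) * ((1 - κp t) ^ 2 * (fd ‖u t‖) ^ 2 + (κc t) ^ 2) * ‖u t‖ ^ 2 := by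
  intro t ht
  set v := ((1 - κp t) * fd ‖u t‖) • u t + κc t • perp (u t)
  rw [(hasDerivAt_energy hrp hfd_lip.continuousOn hfe_lip.continuousOn hu (hne t ht)).deriv,
    (hsol t ht).deriv_deriv_add_smul, inner_sub_left, real_inner_smul_left,
    real_inner_self_eq_norm_sq]
  calc ⟪v, deriv u t⟫ - ν * ‖deriv u t‖ ^ 2
      ≤ ‖v‖ ^ 2 / (4 * ν) := real_inner_sub_mul_norm_sq_le hν v (deriv u t)
    _ ≤ ‖v‖ ^ 2 / (2 * ν) := by gcongr; linarith
    _ = _ := by rw [norm_smul_add_smul_perp_sq]; field_simp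

/-- Energy growth estimate: along a solution of the relative equation with
continuous controls, `E'(t) ≤ (1/(2ν)) ((1 − κᵖ(t))² f_d(|u|)² + κᶜ(t)²) |u|²`. -/
theorem energy_growth_estimate
    (fd fe : ℝ → ℝ) (rp γm : ℝ) (hrp : 0 < rp) (hγm : 0 < γm)
    (hfd_lip : LocallyLipschitzOn (Set.Ioi (0:ℝ)) fd)
    (hfe_lip : LocallyLipschitzOn (Set.Ioi (0:ℝ)) fe)
    (hf_neg : ∀ r : ℝ, 0 < r → r < rp → fd r - fe r < 0)
    (hf_nonneg : ∀ r : ℝ, rp ≤ r → 0 ≤ fd r - fe r)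
    (hf_deriv : 0 < deriv (fun r => fd r - fe r) rp)
    (hfd_nonneg : ∀ r : ℝ, 0 < r → 0 ≤ fd r)
    (hfd_bdd : ∃ C : ℝ, ∀ r : ℝ, 0 < r → fd r ≤ C)
    (hfd_lim : Filter.Tendsto fd Filter.atTop (nhds γm))
    (hfe_nonneg : ∀ r : ℝ, 0 < r → 0 ≤ fe r)
    (hfe_div : ¬ MeasureTheory.IntegrableOn (fun r => r * fe r) (Set.Ioc 0 rp))
    (hfe_lim : Filter.Tendsto fe Filter.atTop (nhds 0))
    (ν : ℝ) (hν : 0 < ν) (κp κc : ℝ → ℝ)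
    (hκp_cont : Continuous κp) (hκc_cont : Continuous κc)
    (I : Set ℝ) (u : ℝ → EuclideanSpace ℝ (Fin 2)) (hu : ContDiff ℝ 2 u)
    (hsol : ∀ t ∈ I, SolvesRel fd fe ν κp κc u t)
    (hne : ∀ t ∈ I, u t ≠ 0) :
    ∀ t ∈ I, deriv (fun s => ‖deriv u s‖ ^ 2 / 2 + pot fd fe rp (u s)) t
      ≤ 1 / (2 * ν) * ((1 - κp t) ^ 2 * (fd ‖u t‖) ^ 2 + (κc t) ^ 2) * ‖u t‖ ^ 2 :=
  energy_growth_estimate_general fd fe rp hrp hfd_lip hfe_lip ν hν κp κc I u hu hsol hne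
end
end

section
/- Explicit linear pursuit solutions: assume f(r_p) = 0 (which follows by continuity of f from the sign conditions), so that f_d(r_p) = f_e(r_p). Let u* ∈ ℝ² with |u*| = r_p and let u_e* ∈ ℝ² be arbitrary. Define ū_e(t) := −(f_d(r_p)/ν) u* t + u_e* and ū_d(t) := ū_e(t) + u*. Then the pair (ū_d, ū_e) solves the one-driver one-evader system for all t ∈ ℝ with the constant controls κᵖ(t) ≡ 1 and κᶜ(t) ≡ 0. -/
open Real Filter MeasureTheory intervalIntegral
open scoped RealInnerProductSpace Topology

noncomputable section

/-- The one-driver one-evader guidance-by-repulsion system holds at time `t`: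
`u_d'' = −κᵖ(t) f_d(|u|) u + κᶜ(t) u^⊥ − ν u_d'` and
`u_e'' = −f_e(|u|) u − ν u_e'`, where `u = u_d − u_e`. -/
def SolvesSys (fd fe : ℝ → ℝ) (ν : ℝ) (κp κc : ℝ → ℝ)
    (ud ue : ℝ → EuclideanSpace ℝ (Fin 2)) (t : ℝ) : Prop :=
  deriv (deriv ud) t
      = -(κp t * fd ‖ud t - ue t‖) • (ud t - ue t)
        + κc t • perp (ud t - ue t) - ν • deriv ud t ∧
  deriv (deriv ue) t
      = -(fe ‖ud t - ue t‖) • (ud t - ue t) - ν • deriv ue t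

/-- Explicit linear pursuit solutions: if `f_d(r_p) = f_e(r_p)`, then for any
`u*` with `|u*| = r_p` and any `u_e*`, the pair
`ū_d(t) = −(f_d(r_p)/ν) u* t + u_e* + u*`, `ū_e(t) = −(f_d(r_p)/ν) u* t + u_e*`
solves the system for all `t` with `κᵖ ≡ 1`, `κᶜ ≡ 0`. -/
theorem explicit_linear_pursuit_solution
    (fd fe : ℝ → ℝ) (rp γm : ℝ) (hrp : 0 < rp) (hγm : 0 < γm)
    (hfd_lip : LocallyLipschitzOn (Set.Ioi (0:ℝ)) fd)
    (hfe_lip : LocallyLipschitzOn (Set.Ioi (0:ℝ)) fe)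
    (hf_neg : ∀ r : ℝ, 0 < r → r < rp → fd r - fe r < 0)
    (hf_nonneg : ∀ r : ℝ, rp ≤ r → 0 ≤ fd r - fe r)
    (hf_deriv : 0 < deriv (fun r => fd r - fe r) rp)
    (hfd_nonneg : ∀ r : ℝ, 0 < r → 0 ≤ fd r)
    (hfd_bdd : ∃ C : ℝ, ∀ r : ℝ, 0 < r → fd r ≤ C)
    (hfd_lim : Filter.Tendsto fd Filter.atTop (nhds γm))
    (hfe_nonneg : ∀ r : ℝ, 0 < r → 0 ≤ fe r)
    (hfe_div : ¬ MeasureTheory.IntegrableOn (fun r => r * fe r) (Set.Ioc 0 rp))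
    (hfe_lim : Filter.Tendsto fe Filter.atTop (nhds 0))
    (ν : ℝ) (hν : 0 < ν)
    (hfp : fd rp = fe rp)
    (ustar uestar : EuclideanSpace ℝ (Fin 2)) (hustar : ‖ustar‖ = rp) :
    ∀ t : ℝ, SolvesSys fd fe ν (fun _ => 1) (fun _ => 0)
      (fun s => (-(fd rp / ν) * s) • ustar + uestar + ustar)
      (fun s => (-(fd rp / ν) * s) • ustar + uestar) t := by

  intro t
  set c : ℝ := -(fd rp / ν) with hc
  have hlin : ∀ (v : EuclideanSpace ℝ (Fin 2)) (s : ℝ),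
      HasDerivAt (fun s : ℝ => (c * s) • ustar + v) (c • ustar) s := by
    intro v s
    have h1 : HasDerivAt (fun s : ℝ => c * s) c s := by
      simpa using (hasDerivAt_id s).const_mul c
    simpa using (h1.smul_const ustar).add_const v
  have hderiv_e : deriv (fun s : ℝ => (c * s) • ustar + uestar) = fun _ => c • ustar := by
    funext s; exact (hlin uestar s).deriv
  have heq : (fun s : ℝ => (c * s) • ustar + uestar + ustar)
      = fun s : ℝ => (c * s) • ustar + (uestar + ustar) := by
    funext s; rw [add_assoc]
  have hderiv_d : deriv (fun s : ℝ => (c * s) • ustar + uestar + ustar) = fun _ => c • ustar := by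
    rw [heq]; funext s; exact (hlin (uestar + ustar) s).deriv
  have hdiff : (fun s : ℝ => (c * s) • ustar + uestar + ustar) t
      - (fun s : ℝ => (c * s) • ustar + uestar) t = ustar := by
    simp
  have hν' : ν ≠ 0 := ne_of_gt hν
  have hνc : ν * c = -fd rp := by rw [hc]; field_simp
  constructor
  · rw [hderiv_d]
    simp only [deriv_const, hdiff, hustar]
    rw [smul_smul, hνc]
    module
  · rw [hderiv_e]
    simp only [deriv_const, hdiff, hustar]
    rw [smul_smul, hνc, hfp]
    module
end
end

section
/- Explicit rotational circumvention solutions: let κᶜ ≠ 0 be a constant with |κᶜ| < ν √γ_m, let r_c > 0 satisfy f(r_c) = (κᶜ/ν)², and let φ₁ ∈ ℝ and u_c* ∈ ℝ² be arbitrary. Then there exist radii r_d, r_e ≥ 0 and phases φ_d, φ_e ∈ ℝ such that the pair ū_d(t) := r_d (cos(κᶜ t/ν + φ_d), sin(κᶜ t/ν + φ_d)) + u_c* and ū_e(t) := r_e (cos(κᶜ t/ν + φ_e), sin(κᶜ t/ν + φ_e)) + u_c* solves the one-driver one-evader system for all t ∈ ℝ with the constant controls κᵖ(t) ≡ 1 and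 κᶜ(t) ≡ κᶜ, and moreover ū_d(t) − ū_e(t) = r_c (cos(κᶜ t/ν + φ₁), sin(κᶜ t/ν + φ₁)) for all t; that is, the driver and evader rotate with the same angular velocity κᶜ/ν about the common center u_c*. -/
/-! Identify the plane with `ℂ`: `perp` becomes multiplication by `I` and a uniform rotation with
angular velocity `ω` about `c` becomes `t ↦ z e^{iωt} + c`. Differentiation multiplies the amplitude
by `iω`, so a pair of such rotations solves the system as soon as the amplitudes satisfy
`((iω)² + iνω) z_d = (-f_d(r_c) + iκᶜ) z₁` and `((iω)² + iνω) z_e = -f_e(r_c) z₁`, where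
`z₁ = z_d - z_e` and `|z₁| = r_c`. With `κᶜ = νω` both are solved by dividing by
`iω(iω + ν) ≠ 0`, and the difference of the two solutions is `z₁` precisely because
`f(r_c) = ω²`. -/

open Real Filter MeasureTheory intervalIntegral
open scoped RealInnerProductSpace Topology

noncomputable section

/-- The planar vector `r (cos θ, sin θ)`. -/
def circVec (r θ : ℝ) : EuclideanSpace ℝ (Fin 2) :=
  (WithLp.equiv 2 (Fin 2 → ℝ)).symm ![r * Real.cos θ, r * Real.sin θ]

open Complex

local notation "toPlane" => Complex.orthonormalBasisOneI.repr

lemma real_smul_toPlane (r : ℝ) (z : ℂ) : r • toPlane z = toPlane (r * z) := by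
  rw [← Complex.real_smul, map_smul]

lemma perp_toPlane (z : ℂ) : perp (toPlane z) = toPlane (I * z) := by
  ext i; fin_cases i <;> simp [perp]

lemma circVec_eq_toPlane (r θ : ℝ) : circVec r θ = toPlane (r * exp (θ * I)) := by
  ext i; fin_cases i <;> simp [circVec, exp_ofReal_mul_I_re, exp_ofReal_mul_I_im]

def rotating (z : ℂ) (ω : ℝ) (c : EuclideanSpace ℝ (Fin 2)) (t : ℝ) : EuclideanSpace ℝ (Fin 2) :=
  toPlane (z * exp (ω * t * I)) + c

lemma circVec_eq_rotating (r ω φ : ℝ) (t : ℝ) :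
    circVec r (ω * t + φ) = rotating (r * exp (φ * I)) ω 0 t := by
  rw [rotating, circVec_eq_toPlane, add_zero, mul_assoc, ← Complex.exp_add]
  congr 3
  push_cast; ring

lemma circVec_norm_arg (z : ℂ) (ω : ℝ) (c : EuclideanSpace ℝ (Fin 2)) :
    (fun t => circVec ‖z‖ (ω * t + arg z) + c) = rotating z ω c := by
  ext1 t
  rw [circVec_eq_rotating, norm_mul_exp_arg_mul_I, rotating, rotating, add_zero]

lemma hasDerivAt_rotating (z : ℂ) (ω : ℝ) (c : EuclideanSpace ℝ (Fin 2)) (t : ℝ) :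
    HasDerivAt (rotating z ω c) (rotating (ω * I * z) ω 0 t) t := by
  have h : HasDerivAt (fun s : ℝ => z * exp (ω * s * I)) (ω * I * z * exp (ω * t * I)) t := by
    have := (((hasDerivAt_id (t : ℂ)).const_mul (ω * I)).cexp.const_mul z).comp_ofReal
    convert this using 1
    · ext s; rw [id, mul_right_comm]
    · rw [id, mul_right_comm (ω : ℂ) I (t : ℂ)]; ring
  rw [show rotating (ω * I * z) ω 0 t = toPlane (ω * I * z * exp (ω * t * I)) from add_zero _]
  exact ((toPlane).toContinuousLinearEquiv.hasFDerivAt.comp_hasDerivAt t h).add_const c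

lemma deriv_rotating (z : ℂ) (ω : ℝ) (c : EuclideanSpace ℝ (Fin 2)) :
    deriv (rotating z ω c) = rotating (ω * I * z) ω 0 :=
  funext fun t => (hasDerivAt_rotating z ω c t).deriv

lemma rotating_sub_rotating (zd ze : ℂ) (ω : ℝ) (c : EuclideanSpace ℝ (Fin 2)) (t : ℝ) :
    rotating zd ω c t - rotating ze ω c t = rotating (zd - ze) ω 0 t := by
  simp only [rotating, add_sub_add_right_eq_sub, add_zero, ← map_sub, sub_mul]

lemma norm_rotating (z : ℂ) (ω t : ℝ) : ‖rotating z ω 0 t‖ = ‖z‖ := by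
  rw [rotating, add_zero, LinearIsometryEquiv.norm_map, norm_mul,
    show (ω : ℂ) * t * I = ((ω * t : ℝ) : ℂ) * I by push_cast; ring, norm_exp_ofReal_mul_I, mul_one]

lemma solvesSys_rotating {fd fe : ℝ → ℝ} {ν κ ω : ℝ} {zd ze : ℂ} (c : EuclideanSpace ℝ (Fin 2))
    (hd : (ω * I) ^ 2 * zd
      = -fd ‖zd - ze‖ * (zd - ze) + κ * I * (zd - ze) - ν * (ω * I * zd))
    (he : (ω * I) ^ 2 * ze = -fe ‖zd - ze‖ * (zd - ze) - ν * (ω * I * ze)) (t : ℝ) :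
    SolvesSys fd fe ν (fun _ => 1) (fun _ => κ) (rotating zd ω c) (rotating ze ω c) t := by
  simp only [SolvesSys, deriv_rotating, rotating_sub_rotating, norm_rotating, one_mul]
  simp only [rotating, add_zero, perp_toPlane, real_smul_toPlane, ← map_add, ← map_sub]
  constructor <;> congr 1 <;> push_cast
  · linear_combination exp (ω * t * I) * hd
  · linear_combination exp (ω * t * I) * he

lemma exists_rotating_amplitudes {a b ω : ℝ} (ν : ℝ) (hω : ω ≠ 0) (hab : a - b = ω ^ 2) (z : ℂ) :
    ∃ zd ze : ℂ, zd - ze = z ∧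
      (ω * I) ^ 2 * zd = -a * z + ν * ω * I * z - ν * (ω * I * zd) ∧
      (ω * I) ^ 2 * ze = -b * z - ν * (ω * I * ze) := by
  set D : ℂ := ω * I * (ω * I + ν)
  have hD : D ≠ 0 := by
    refine mul_ne_zero (by simp [hω]) fun h => hω ?_
    simpa using congrArg Complex.im h
  refine ⟨(-a + ν * ω * I) * z / D, -b * z / D, ?_, ?_, ?_⟩
  · have hab' : (a : ℂ) - b = ω ^ 2 := by exact_mod_cast hab
    rw [← sub_div, div_eq_iff hD]
    linear_combination (-z) * hab' - ω ^ 2 * z * I_sq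
  all_goals field_simp; ring

theorem explicit_rotational_circumvention_solution_general
    (fd fe : ℝ → ℝ)
    (ν : ℝ) (hν : 0 < ν) (κc : ℝ) (hκc0 : κc ≠ 0)
    (rc : ℝ) (hrc : 0 < rc) (hrceq : fd rc - fe rc = (κc / ν) ^ 2)
    (φ₁ : ℝ) (ucstar : EuclideanSpace ℝ (Fin 2)) :
    ∃ rd re φd φe : ℝ, 0 ≤ rd ∧ 0 ≤ re ∧
      (∀ t : ℝ, SolvesSys fd fe ν (fun _ => 1) (fun _ => κc)
        (fun s => circVec rd (κc / ν * s + φd) + ucstar)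
        (fun s => circVec re (κc / ν * s + φe) + ucstar) t) ∧
      (∀ t : ℝ, circVec rd (κc / ν * t + φd) - circVec re (κc / ν * t + φe)
        = circVec rc (κc / ν * t + φ₁)) := by
  set ω := κc / ν
  have hκc : (κc : ℂ) = ν * ω := by rw [ofReal_div, mul_div_cancel₀ _ (ofReal_ne_zero.2 hν.ne')]
  obtain ⟨zd, ze, hsub, hd, he⟩ :=
    exists_rotating_amplitudes ν (div_ne_zero hκc0 hν.ne') hrceq (rc * exp (φ₁ * I))
  have hnorm : ‖zd - ze‖ = rc := by
    rw [hsub, norm_mul, norm_exp_ofReal_mul_I, mul_one, norm_real, Real.norm_of_nonneg hrc.le]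
  refine ⟨‖zd‖, ‖ze‖, arg zd, arg ze, norm_nonneg _, norm_nonneg _, fun t => ?_, fun t => ?_⟩
  · rw [circVec_norm_arg, circVec_norm_arg]
    refine solvesSys_rotating ucstar ?_ ?_ t
    · rw [hnorm, hsub, hκc]; linear_combination hd
    · rwa [hnorm, hsub]
  · rw [circVec_eq_rotating, circVec_eq_rotating, circVec_eq_rotating, norm_mul_exp_arg_mul_I,
      norm_mul_exp_arg_mul_I, rotating_sub_rotating, hsub]

/-- Explicit rotational circumvention solutions: given `κᶜ ≠ 0` with
`|κᶜ| < ν √γ_m`, `r_c > 0` with `f(r_c) = (κᶜ/ν)²`, any phase `φ₁` and any center `u_c*`,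
there exist radii `r_d, r_e ≥ 0` and phases `φ_d, φ_e` such that the rotating pair solves
the system with `κᵖ ≡ 1`, `κᶜ ≡ κᶜ` and has relative position
`r_c (cos(κᶜ t/ν + φ₁), sin(κᶜ t/ν + φ₁))`. -/
theorem explicit_rotational_circumvention_solution
    (fd fe : ℝ → ℝ) (rp γm : ℝ) (hrp : 0 < rp) (hγm : 0 < γm)
    (hfd_lip : LocallyLipschitzOn (Set.Ioi (0:ℝ)) fd)
    (hfe_lip : LocallyLipschitzOn (Set.Ioi (0:ℝ)) fe)
    (hf_neg : ∀ r : ℝ, 0 < r → r < rp → fd r - fe r < 0)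
    (hf_nonneg : ∀ r : ℝ, rp ≤ r → 0 ≤ fd r - fe r)
    (hf_deriv : 0 < deriv (fun r => fd r - fe r) rp)
    (hfd_nonneg : ∀ r : ℝ, 0 < r → 0 ≤ fd r)
    (hfd_bdd : ∃ C : ℝ, ∀ r : ℝ, 0 < r → fd r ≤ C)
    (hfd_lim : Filter.Tendsto fd Filter.atTop (nhds γm))
    (hfe_nonneg : ∀ r : ℝ, 0 < r → 0 ≤ fe r)
    (hfe_div : ¬ MeasureTheory.IntegrableOn (fun r => r * fe r) (Set.Ioc 0 rp))
    (hfe_lim : Filter.Tendsto fe Filter.atTop (nhds 0))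
    (ν : ℝ) (hν : 0 < ν) (κc : ℝ) (hκc0 : κc ≠ 0) (hκc : |κc| < ν * Real.sqrt γm)
    (rc : ℝ) (hrc : 0 < rc) (hrceq : fd rc - fe rc = (κc / ν) ^ 2)
    (φ₁ : ℝ) (ucstar : EuclideanSpace ℝ (Fin 2)) :
    ∃ rd re φd φe : ℝ, 0 ≤ rd ∧ 0 ≤ re ∧
      (∀ t : ℝ, SolvesSys fd fe ν (fun _ => 1) (fun _ => κc)
        (fun s => circVec rd (κc / ν * s + φd) + ucstar)
        (fun s => circVec re (κc / ν * s + φe) + ucstar) t) ∧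
      (∀ t : ℝ, circVec rd (κc / ν * t + φd) - circVec re (κc / ν * t + φe)
        = circVec rc (κc / ν * t + φ₁)) :=
  explicit_rotational_circumvention_solution_general fd fe ν hν κc hκc0 rc hrc hrceq φ₁ ucstar
end
end
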